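/- Let q ≥ 1 and m ≥ 2q, and let u_0 < u_1 < … < u_{m+q} be a strictly increasing knot vector satisfying Δu_j = Δu_{j+m−q} for all j = 0, …, 2q−1, where Δu_j := u_{j+1} − u_j. Let β ∈ ℝ, and for 0 ≤ i < q define the complex-valued quasi-periodic combination φ_i(u) := B_i^q(u) + e^{iβ}·B_{i+m−q}^q(u) (with e^{iβ} = exp(√−1·β) ∈ ℂ). Then φ_i satisfies the quasi-periodic relation φ_i(u_m) = e^{iβ}·φ_i(u_q); indeed B_i^q(u_m) = 0, B_{i+m−q}^q(u_q) = 0, and B_{i+m−q}^q(u_m) = B_i^q(u_q). -/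

import Mathlib

open Complex

/-- The B-spline functions of degree `q` for the knot sequence `u`, defined by the
Cox–de Boor recursion. `bspline u q i` is `B_i^q`. Fractions with zero denominator
are `0` (Lean's convention `x / 0 = 0`). -/
noncomputable def bspline (u : ℕ → ℝ) : ℕ → ℕ → ℝ → ℝ
  | 0, i, x => if u i ≤ x ∧ x < u (i + 1) then 1 else 0
  | q + 1, i, x =>
      (x - u i) / (u (i + q + 1) - u i) * bspline u q i x +
      (u (i + q + 2) - x) / (u (i + q + 2) - u (i + 1)) * bspline u q (i + 1) x

/-!
The equal-increment condition makes `u_{m-q}, …, u_{m+q}` the translate of `u_0, …, u_{2q}` by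
`c = u_{m-q} - u_0`, and the Cox–de Boor recursion is invariant under translating knots and
argument together, so `B_{i+m-q}^q(u_m) = B_i^q(u_q)`. The two vanishing statements are support
properties: `u_m` lies right of the support `[u_i, u_{i+q+1})` because `i + q + 1 ≤ 2q ≤ m`, and
`u_q ≤ u_{i+m-q}` lies at or left of the support of `B_{i+m-q}^q`, where a spline of degree `≥ 1`
vanishes.
-/

section Support

variable (u : ℕ → ℝ)

theorem bspline_eq_zero_of_forall_notMem_Ico {q i : ℕ} {x : ℝ}
    (h : ∀ j, i ≤ j → j ≤ i + q → x ∉ Set.Ico (u j) (u (j + 1))) : bspline u q i x = 0 := by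
  induction q generalizing i with
  | zero => simpa [bspline] using h i le_rfl (by omega)
  | succ q ih =>
    rw [bspline, ih fun j hij hj => h j hij (by omega),
      ih fun j hij hj => h j (by omega) (by omega)]
    ring

theorem bspline_eq_zero_of_lt {q i : ℕ} {x : ℝ} (h : ∀ j, i ≤ j → j ≤ i + q → x < u j) :
    bspline u q i x = 0 :=
  bspline_eq_zero_of_forall_notMem_Ico u fun j hij hj hx => (h j hij hj).not_ge hx.1

theorem bspline_eq_zero_of_le {q i : ℕ} {x : ℝ}
    (h : ∀ j, i < j → j ≤ i + q + 1 → u j ≤ x) : bspline u q i x = 0 :=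
  bspline_eq_zero_of_forall_notMem_Ico u fun j hij hj hx =>
    (h (j + 1) (by omega) (by omega)).not_gt hx.2

/-- Unlike `bspline_eq_zero_of_lt`, this allows `x = u i`: there the factor `x - u i` kills
the only term that could be nonzero. -/
theorem bspline_succ_eq_zero_of_le_left {q i : ℕ} {x : ℝ} (hx : x ≤ u i)
    (h : ∀ j, i < j → j ≤ i + q + 1 → x < u j) : bspline u (q + 1) i x = 0 := by
  have hright : bspline u q (i + 1) x = 0 :=
    bspline_eq_zero_of_lt u fun j hij hj => h j (by omega) (by omega)
  rcases hx.eq_or_lt with rfl | hlt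
  · rw [bspline, hright]
    ring
  · have hleft : bspline u q i x = 0 := bspline_eq_zero_of_lt u fun j hij hj =>
      hij.eq_or_lt.elim (fun hj' => hj' ▸ hlt) fun hij' => h j hij' (by omega)
    rw [bspline, hleft, hright]
    ring

end Support

theorem bspline_translate (u : ℕ → ℝ) (c : ℝ) (k : ℕ) {q i : ℕ} (x : ℝ)
    (h : ∀ j, i ≤ j → j ≤ i + q + 1 → u (j + k) = u j + c) :
    bspline u q (i + k) (x + c) = bspline u q i x := by
  induction q generalizing i with
  | zero =>
    simp only [bspline, add_right_comm i k 1, h i le_rfl (by omega),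
      h (i + 1) (by omega) (by omega), add_le_add_iff_right, add_lt_add_iff_right]
  | succ q ih =>
    rw [bspline, bspline, show i + k + q + 1 = i + q + 1 + k by omega,
      show i + k + q + 2 = i + q + 2 + k by omega, show i + k + 1 = i + 1 + k by omega,
      h i le_rfl (by omega), h (i + 1) (by omega) (by omega),
      h (i + q + 1) (by omega) (by omega), h (i + q + 2) (by omega) (by omega),
      ih fun j hij hj => h j hij (by omega), ih fun j hij hj => h j (by omega) (by omega)]
    ring

theorem add_index_eq_add_of_sub_succ_eq (u : ℕ → ℝ) {n k : ℕ}
    (h : ∀ j < n, u (j + 1) - u j = u (j + k + 1) - u (j + k)) :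
    ∀ j ≤ n, u (j + k) = u j + (u k - u 0) := by
  intro j hj
  induction j with
  | zero => simp
  | succ j ih =>
    have := h j (by omega)
    rw [add_right_comm] at this
    linarith [ih (by omega)]

theorem quasi_periodic_bspline_combination_general (q m : ℕ) (hm : 2 * q ≤ m)
    (u : ℕ → ℝ) (hmono : ∀ j < m + q, u j < u (j + 1))
    (hequi : ∀ j < 2 * q, u (j + 1) - u j = u (j + (m - q) + 1) - u (j + (m - q)))
    (β : ℝ) (φ : ℕ → ℝ → ℂ)
    (hφ : φ = fun i s =>
      (bspline u q i s : ℂ) + Complex.exp (Complex.I * β) * (bspline u q (i + (m - q)) s : ℂ)) :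
    ∀ i < q,
      φ i (u m) = Complex.exp (Complex.I * β) * φ i (u q) ∧
      bspline u q i (u m) = 0 ∧
      bspline u q (i + (m - q)) (u q) = 0 ∧
      bspline u q (i + (m - q)) (u m) = bspline u q i (u q) := by
  intro i hi
  have hu : StrictMonoOn u (Set.Iic (m + q)) := strictMonoOn_Iic_of_lt_succ hmono
  have htrans := add_index_eq_add_of_sub_succ_eq u hequi
  have hum : u m = u q + (u (m - q) - u 0) := by
    rw [← htrans q (by omega), Nat.add_sub_cancel' (by omega)]
  have hB₁ : bspline u q i (u m) = 0 := bspline_eq_zero_of_le u fun j _ hj =>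
    hu.monotoneOn (Set.mem_Iic.2 (by omega)) (Set.mem_Iic.2 (by omega)) (by omega)
  have hB₂ : bspline u q (i + (m - q)) (u q) = 0 := by
    obtain ⟨p, rfl⟩ := Nat.exists_eq_add_one_of_ne_zero (by omega : q ≠ 0)
    exact bspline_succ_eq_zero_of_le_left u
      (hu.monotoneOn (Set.mem_Iic.2 (by omega)) (Set.mem_Iic.2 (by omega)) (by omega))
      fun j _ hj => hu (Set.mem_Iic.2 (by omega)) (Set.mem_Iic.2 (by omega)) (by omega)
  have hB₃ : bspline u q (i + (m - q)) (u m) = bspline u q i (u q) := by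
    rw [hum]
    exact bspline_translate u _ _ _ fun j _ hj => htrans j (by omega)
  refine ⟨?_, hB₁, hB₂, hB₃⟩
  simp only [hφ, hB₁, hB₂, hB₃]
  push_cast
  ring

/-- Quasi-periodicity of the combined basis function
`φ_i(u) = B_i^q(u) + e^{iβ}·B_{i+m−q}^q(u)` at the two ends `u_q` and `u_m` of
the parameter domain (scalar content of the quasi-periodic vector basis `Mᵖ`). -/
theorem quasi_periodic_bspline_combination (q m : ℕ) (hq : 1 ≤ q) (hm : 2 * q ≤ m)
    (u : ℕ → ℝ) (hmono : ∀ j < m + q, u j < u (j + 1))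
    (hequi : ∀ j < 2 * q, u (j + 1) - u j = u (j + (m - q) + 1) - u (j + (m - q)))
    (β : ℝ) (φ : ℕ → ℝ → ℂ)
    (hφ : φ = fun i s =>
      (bspline u q i s : ℂ) + Complex.exp (Complex.I * β) * (bspline u q (i + (m - q)) s : ℂ)) :
    ∀ i < q,
      φ i (u m) = Complex.exp (Complex.I * β) * φ i (u q) ∧
      bspline u q i (u m) = 0 ∧
      bspline u q (i + (m - q)) (u q) = 0 ∧
      bspline u q (i + (m - q)) (u m) = bspline u q i (u q) :=
  quasi_periodic_bspline_combination_general q m hm u hmono hequi β φ hφ
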